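/- Let X be a connected pre-ordered set (with at least 2 elements, finite), R a 2-torsion free commutative ring with unity, and L a Lie triple derivation of I(X,R). If i, j ∈ X are distinct with i ≤ j and j ≤ i, then C^{ii}_{ii} = C^{jj}_{jj}, where C^{ij}_{xy} are the coefficients of L on the matrix-unit basis. -/

import Mathlib

open IncidenceAlgebra
open scoped Classical

variable {R X : Type*}

/-- The matrix unit `e_{x y}` of the incidence algebra (zero if `¬ x ≤ y`). -/
noncomputable def matrixUnit [CommRing R] [Preorder X] [DecidableEq X] (x y : X) :
    IncidenceAlgebra R X :=
  ⟨fun u v => if u = x ∧ v = y ∧ x ≤ y then 1 else 0, fun a b hab => by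
    try dsimp only
    split_ifs with h
    · exact absurd (by rw [h.1, h.2.1]; exact h.2.2) hab
    · rfl⟩

/-- The Lie bracket `[f,g] = fg - gf`. -/
def lieBr {A : Type*} [Ring A] (f g : A) : A := f * g - g * f

/-- `L` is a Lie triple derivation of the incidence algebra. -/
def IsLieTripleDer [CommRing R] [Preorder X] [DecidableEq X] [LocallyFiniteOrder X]
    (L : IncidenceAlgebra R X →ₗ[R] IncidenceAlgebra R X) : Prop :=
  ∀ f g h : IncidenceAlgebra R X,
    L (lieBr (lieBr f g) h) =
      lieBr (lieBr (L f) g) h + lieBr (lieBr f (L g)) h + lieBr (lieBr f g) (L h)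

/-- `X` is connected: any two points are joined by a chain of comparabilities. -/
def OrdConnected' (X : Type*) [Preorder X] : Prop :=
  ∀ x y : X, Relation.ReflTransGen (fun a b : X => a ≤ b ∨ b ≤ a) x y

/-- `R` is 2-torsion free. -/
def TwoTorsionFree (R : Type*) [CommRing R] : Prop := ∀ r : R, r + r = 0 → r = 0

/-! For `i ≤ j ≤ i`, `i ≠ j`, the matrix units satisfy
`[[e_ii, e_ij], e_ji] = e_ii - e_jj` and `[[e_ij, e_ji], e_ij] = 2 e_ij`. Feeding these triples to
the Lie triple derivation identity and reading off the `(j, j)` and `(i, j)` entries gives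
`C^{ii}_{ii} - C^{jj}_{jj} = -(C^{ij}_{ij} + C^{ji}_{ji})` and `2 (C^{ij}_{ij} + C^{ji}_{ji}) = 0`;
2-torsion freeness kills the right-hand side of the first. -/

section MatrixUnit

variable [CommRing R] [Preorder X] [DecidableEq X]

lemma matrixUnit_apply (x y u v : X) :
    matrixUnit (R := R) x y u v = if u = x ∧ v = y ∧ x ≤ y then 1 else 0 := rfl

variable [LocallyFiniteOrder X]

lemma mul_matrixUnit_apply (f : IncidenceAlgebra R X) (x y a b : X) :
    (f * matrixUnit x y : IncidenceAlgebra R X) a b = if b = y ∧ x ≤ y then f a x else 0 := by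
  split_ifs with h
  · obtain ⟨rfl, hxb⟩ := h
    have hterm : ∀ z, f a z * matrixUnit x b z b = if x = z then f a z else 0 := fun z => by
      simp [matrixUnit_apply, hxb, eq_comm]
    rw [mul_apply, Finset.sum_congr rfl fun z _ => hterm z, Finset.sum_ite_eq]
    by_cases hax : a ≤ x
    · simp [hax, hxb]
    · simp [hax, apply_eq_zero_of_not_le hax]
  · refine Finset.sum_eq_zero fun z _ => ?_
    simp [matrixUnit_apply]
    tauto

lemma matrixUnit_mul_apply (f : IncidenceAlgebra R X) (x y a b : X) :
    (matrixUnit x y * f : IncidenceAlgebra R X) a b = if a = x ∧ x ≤ y then f y b else 0 := by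
  split_ifs with h
  · obtain ⟨rfl, hay⟩ := h
    have hterm : ∀ z, matrixUnit a y a z * f z b = if y = z then f z b else 0 := fun z => by
      simp [matrixUnit_apply, hay, eq_comm]
    rw [mul_apply, Finset.sum_congr rfl fun z _ => hterm z, Finset.sum_ite_eq]
    by_cases hyb : y ≤ b
    · simp [hay, hyb]
    · simp [hyb, apply_eq_zero_of_not_le hyb]
  · refine Finset.sum_eq_zero fun z _ => ?_
    simp [matrixUnit_apply]
    tauto

lemma matrixUnit_mul_matrixUnit {x y z w : X} (hxy : x ≤ y) (hzw : z ≤ w) :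
    (matrixUnit x y * matrixUnit z w : IncidenceAlgebra R X) =
      if y = z then matrixUnit x w else 0 := by
  ext a b _
  split_ifs with h
  · subst h
    rw [matrixUnit_mul_apply]
    simp [matrixUnit_apply, hxy, hzw, hxy.trans hzw, ite_and]
  · rw [matrixUnit_mul_apply]
    simp [matrixUnit_apply, h]

end MatrixUnit

section Brackets

variable [CommRing R] [Preorder X] [DecidableEq X] [LocallyFiniteOrder X]

lemma lieBr_matrixUnit_self_left {i j : X} (hij : i ≠ j) (hle : i ≤ j) :
    lieBr (matrixUnit i i) (matrixUnit i j) = (matrixUnit i j : IncidenceAlgebra R X) := by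
  simp [lieBr, matrixUnit_mul_matrixUnit, hle, hij.symm]

lemma lieBr_matrixUnit_matrixUnit_swap {i j : X} (hle : i ≤ j) (hge : j ≤ i) :
    lieBr (matrixUnit i j) (matrixUnit j i) =
      (matrixUnit i i - matrixUnit j j : IncidenceAlgebra R X) := by
  simp [lieBr, matrixUnit_mul_matrixUnit, hle, hge]

lemma lieBr_sub_matrixUnit {i j : X} (hij : i ≠ j) (hle : i ≤ j) :
    lieBr (matrixUnit i i - matrixUnit j j) (matrixUnit i j) =
      (matrixUnit i j + matrixUnit i j : IncidenceAlgebra R X) := by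
  simp [lieBr, sub_mul, mul_sub, matrixUnit_mul_matrixUnit, hle, hij.symm]

end Brackets

namespace IsLieTripleDer

variable [CommRing R] [Preorder X] [DecidableEq X] [LocallyFiniteOrder X]
  {L : IncidenceAlgebra R X →ₗ[R] IncidenceAlgebra R X}

lemma diag_coeff_sub_diag_coeff (hL : IsLieTripleDer L) {i j : X} (hij : i ≠ j) (hle : i ≤ j)
    (hge : j ≤ i) :
    L (matrixUnit i i) i i - L (matrixUnit j j) j j =
      -(L (matrixUnit i j) i j + L (matrixUnit j i) j i) := by
  have h := congrArg (fun f : IncidenceAlgebra R X => f j j)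
    (hL (matrixUnit i i) (matrixUnit i j) (matrixUnit j i))
  rw [lieBr_matrixUnit_self_left hij hle, lieBr_matrixUnit_matrixUnit_swap hle hge,
    map_sub] at h
  simp only [lieBr, IncidenceAlgebra.sub_apply, IncidenceAlgebra.add_apply, sub_mul, mul_sub,
    mul_matrixUnit_apply, matrixUnit_mul_apply] at h
  simp [hij.symm, hle, hge] at h
  linear_combination h

lemma offDiag_coeff_add_self (hL : IsLieTripleDer L) {i j : X} (hij : i ≠ j) (hle : i ≤ j)
    (hge : j ≤ i) :
    (L (matrixUnit i j) i j + L (matrixUnit j i) j i) +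
      (L (matrixUnit i j) i j + L (matrixUnit j i) j i) = 0 := by
  have h := congrArg (fun f : IncidenceAlgebra R X => f i j)
    (hL (matrixUnit i j) (matrixUnit j i) (matrixUnit i j))
  rw [lieBr_matrixUnit_matrixUnit_swap hle hge, lieBr_sub_matrixUnit hij hle, map_add] at h
  simp only [lieBr, IncidenceAlgebra.sub_apply, IncidenceAlgebra.add_apply, sub_mul, mul_sub,
    mul_matrixUnit_apply, matrixUnit_mul_apply] at h
  simp [hij, hij.symm, hle, hge] at h
  linear_combination h

end IsLieTripleDer

theorem lieTripleDer_diag_coeff_eq_of_cycle_general [CommRing R] [Preorder X] [DecidableEq X]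
    [LocallyFiniteOrder X]
    (htf : TwoTorsionFree R)
    (L : IncidenceAlgebra R X →ₗ[R] IncidenceAlgebra R X) (hL : IsLieTripleDer L) :
    ∀ i j : X, i ≠ j → i ≤ j → j ≤ i →
      L (matrixUnit i i) i i = L (matrixUnit j j) j j := by
  intro i j hij hle hge
  have hsum := htf _ (hL.offDiag_coeff_add_self hij hle hge)
  linear_combination hL.diag_coeff_sub_diag_coeff hij hle hge - hsum

/-- If `i ≠ j` with `i ≤ j` and `j ≤ i`, then `C^{ii}_{ii} = C^{jj}_{jj}`. -/
theorem lieTripleDer_diag_coeff_eq_of_cycle [CommRing R] [Preorder X] [DecidableEq X]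
    [Fintype X] [LocallyFiniteOrder X]
    (htf : TwoTorsionFree R) (hconn : OrdConnected' X) (hcard : 1 < Fintype.card X)
    (L : IncidenceAlgebra R X →ₗ[R] IncidenceAlgebra R X) (hL : IsLieTripleDer L) :
    ∀ i j : X, i ≠ j → i ≤ j → j ≤ i →
      L (matrixUnit i i) i i = L (matrixUnit j j) j j :=
  lieTripleDer_diag_coeff_eq_of_cycle_general htf L hL
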